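/- arXiv:1103.2963 — 4 statements merged into one kernel-verified Lean document; each statement's English description precedes it below -/
import Mathlib

section
/- The element R = ∑_{g,h∈G} (δ_g ⊗ 1) ⊗ (δ_h ⊗ g) in D(G) ⊗ D(G) is invertible and satisfies the quasitriangularity axioms: R Δ(x) = Δ^op(x) R for all x ∈ D(G), (Δ ⊗ id)(R) = R₁₃R₂₃, and (id ⊗ Δ)(R) = R₁₃R₁₂. -/
open Finset

/-- The unit `∑_g δ_g ⊗ 1` of `D(G)` (functions `G × G → K`, `x (g,h)` being the
coefficient of `δ_g ⊗ h`). -/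
def doubleOne {K G : Type*} [Field K] [Group G] [DecidableEq G] : G × G → K :=
  fun p => if p.2 = 1 then 1 else 0

/-- The coproduct `Δ(δ_g ⊗ h) = ∑_{g'g''=g} (δ_{g'} ⊗ h) ⊗ (δ_{g''} ⊗ h)`. -/
def doubleComul {K G : Type*} [Field K] [Group G] [DecidableEq G]
    (x : G × G → K) : (G × G) × (G × G) → K :=
  fun q => if q.1.2 = q.2.2 then x (q.1.1 * q.2.1, q.1.2) else 0

/-- The product on `D(G) ⊗ D(G)`. -/
def doubleMul₂ {K G : Type*} [Field K] [Group G] [Fintype G] [DecidableEq G]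
    (X Y : (G × G) × (G × G) → K) : (G × G) × (G × G) → K :=
  fun q => ∑ h : G, ∑ h' : G,
    X ((q.1.1, h), (q.2.1, h')) *
      Y ((h⁻¹ * q.1.1 * h, h⁻¹ * q.1.2), (h'⁻¹ * q.2.1 * h', h'⁻¹ * q.2.2))

/-- The unit of `D(G) ⊗ D(G)`. -/
def doubleOne₂ {K G : Type*} [Field K] [Group G] [DecidableEq G] :
    (G × G) × (G × G) → K :=
  fun q => doubleOne q.1 * doubleOne q.2

/-- The product on `D(G) ⊗ D(G) ⊗ D(G)`. -/
def doubleMul₃ {K G : Type*} [Field K] [Group G] [Fintype G] [DecidableEq G]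
    (X Y : (G × G) × (G × G) × (G × G) → K) : (G × G) × (G × G) × (G × G) → K :=
  fun t => ∑ h₁ : G, ∑ h₂ : G, ∑ h₃ : G,
    X ((t.1.1, h₁), (t.2.1.1, h₂), (t.2.2.1, h₃)) *
      Y ((h₁⁻¹ * t.1.1 * h₁, h₁⁻¹ * t.1.2),
         (h₂⁻¹ * t.2.1.1 * h₂, h₂⁻¹ * t.2.1.2),
         (h₃⁻¹ * t.2.2.1 * h₃, h₃⁻¹ * t.2.2.2))

/-- The R-matrix `R = ∑_{g,h} (δ_g ⊗ 1) ⊗ (δ_h ⊗ g)` of `D(G)`. -/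
def doubleR {K G : Type*} [Field K] [Group G] [DecidableEq G] :
    (G × G) × (G × G) → K :=
  fun q => if q.1.2 = 1 ∧ q.2.2 = q.1.1 then 1 else 0

/-!
`R` is a sum of delta functions, so every product with `R` (or `R₁₃`) as a factor collapses to a
single term: multiplying by `R` on the left conjugates the second tensor factor by the label `g` of
the first, and multiplying on the right is computed the same way. Each quasitriangularity axiom then
becomes an equality of indicator functions on `G`, settled by group arithmetic; the inverse of `R`
is `∑_{g,h} (δ_g ⊗ 1) ⊗ (δ_h ⊗ g⁻¹)`.
-/

section

variable {K G : Type*} [Field K] [Group G] [Fintype G] [DecidableEq G]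

theorem doubleR_doubleMul₂_apply (Y : (G × G) × (G × G) → K) (a₁ b₁ a₂ b₂ : G) :
    doubleMul₂ doubleR Y ((a₁, b₁), (a₂, b₂)) = Y ((a₁, b₁), (a₁⁻¹ * a₂ * a₁, a₁⁻¹ * b₂)) := by
  simp [doubleMul₂, doubleR, ite_and]

theorem doubleMul₂_doubleR_apply (X : (G × G) × (G × G) → K) (a₁ b₁ a₂ b₂ : G) :
    doubleMul₂ X doubleR ((a₁, b₁), (a₂, b₂)) = X ((a₁, b₁), (a₂, b₂ * (b₁⁻¹ * a₁ * b₁)⁻¹)) := by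
  have hsupp (h h' : G) : (h⁻¹ * b₁ = 1 ∧ h'⁻¹ * b₂ = h⁻¹ * a₁ * h) ↔
      (h = b₁ ∧ h' = b₂ * (b₁⁻¹ * a₁ * b₁)⁻¹) := by
    rw [inv_mul_eq_one, inv_mul_eq_iff_eq_mul, eq_mul_inv_iff_mul_eq, eq_comm (a := b₂)]
    exact and_congr_right fun hh => by rw [hh]
  simp [doubleMul₂, doubleR, hsupp, ite_and]

theorem doubleR₁₃_doubleMul₃_apply (Y : (G × G) × (G × G) × (G × G) → K)
    (a₁ b₁ a₂ b₂ a₃ b₃ : G) :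
    doubleMul₃ (fun t => doubleR (t.1, t.2.2) * doubleOne t.2.1) Y ((a₁, b₁), (a₂, b₂), (a₃, b₃))
      = Y ((a₁, b₁), (a₂, b₂), (a₁⁻¹ * a₃ * a₁, a₁⁻¹ * b₃)) := by
  simp [doubleMul₃, doubleR, doubleOne, ite_and]

def doubleRInv : (G × G) × (G × G) → K :=
  fun q => if q.1.2 = 1 ∧ q.2.2 = q.1.1⁻¹ then 1 else 0

theorem doubleR_mul_doubleRInv :
    doubleMul₂ (doubleR (K := K) (G := G)) doubleRInv = doubleOne₂ := by
  funext ⟨⟨a₁, b₁⟩, a₂, b₂⟩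
  rw [doubleR_doubleMul₂_apply]
  simp [doubleRInv, doubleOne₂, doubleOne, ← ite_and, and_comm]

theorem doubleRInv_mul_doubleR :
    doubleMul₂ (doubleRInv (K := K) (G := G)) doubleR = doubleOne₂ := by
  funext ⟨⟨a₁, b₁⟩, a₂, b₂⟩
  rw [doubleMul₂_doubleR_apply]
  by_cases hb₁ : b₁ = 1 <;> simp [doubleRInv, doubleOne₂, doubleOne, hb₁]

theorem doubleR_mul_doubleComul (x : G × G → K) :
    doubleMul₂ doubleR (doubleComul x)
      = doubleMul₂ (fun q => doubleComul x (q.2, q.1)) doubleR := by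
  funext ⟨⟨a₁, b₁⟩, a₂, b₂⟩
  rw [doubleR_doubleMul₂_apply, doubleMul₂_doubleR_apply]
  by_cases hb₂ : b₂ = a₁ * b₁
  · subst hb₂
    simp [doubleComul, mul_assoc]
  · have hb₁ : b₂ * (b₁⁻¹ * a₁ * b₁)⁻¹ ≠ b₁ := fun h =>
      hb₂ (by rw [mul_inv_eq_iff_eq_mul.mp h]; group)
    simp only [doubleComul, hb₁, if_false]
    rw [if_neg (by rintro rfl; simp at hb₂)]

theorem doubleComul_tensor_id_doubleR :
    (fun t : (G × G) × (G × G) × (G × G) =>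
        if t.1.2 = t.2.1.2 then doubleR (K := K) ((t.1.1 * t.2.1.1, t.1.2), t.2.2) else 0)
      = doubleMul₃ (fun t => doubleR (t.1, t.2.2) * doubleOne t.2.1)
          (fun t => doubleOne t.1 * doubleR (t.2.1, t.2.2)) := by
  funext ⟨⟨a₁, b₁⟩, ⟨a₂, b₂⟩, a₃, b₃⟩
  rw [doubleR₁₃_doubleMul₃_apply]
  simp only [doubleR, doubleOne, ← ite_and, mul_ite, mul_one, mul_zero]
  congr 1
  rw [inv_mul_eq_iff_eq_mul]
  aesop

theorem id_tensor_doubleComul_doubleR :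
    (fun t : (G × G) × (G × G) × (G × G) =>
        if t.2.1.2 = t.2.2.2 then doubleR (K := K) (t.1, (t.2.1.1 * t.2.2.1, t.2.1.2)) else 0)
      = doubleMul₃ (fun t => doubleR (t.1, t.2.2) * doubleOne t.2.1)
          (fun t => doubleR (t.1, t.2.1) * doubleOne t.2.2) := by
  funext ⟨⟨a₁, b₁⟩, ⟨a₂, b₂⟩, a₃, b₃⟩
  rw [doubleR₁₃_doubleMul₃_apply]
  simp only [doubleR, doubleOne, ← ite_and, mul_ite, mul_one, mul_zero]
  congr 1
  rw [inv_mul_eq_one]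
  aesop

end

/-- The element `R = ∑_{g,h∈G} (δ_g ⊗ 1) ⊗ (δ_h ⊗ g)` is invertible in
`D(G) ⊗ D(G)` and satisfies the quasitriangularity axioms
`R Δ(x) = Δᵒᵖ(x) R`, `(Δ ⊗ id)(R) = R₁₃R₂₃` and `(id ⊗ Δ)(R) = R₁₃R₁₂`. -/
theorem double_R_quasitriangular {K G : Type*} [Field K] [Group G] [Fintype G]
    [DecidableEq G] :
    -- invertibility
    (∃ R' : (G × G) × (G × G) → K,
      doubleMul₂ (doubleR (K := K) (G := G)) R' = doubleOne₂ ∧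
      doubleMul₂ R' (doubleR (K := K) (G := G)) = doubleOne₂) ∧
    -- `R Δ(x) = Δᵒᵖ(x) R`
    (∀ x : G × G → K,
      doubleMul₂ doubleR (doubleComul x)
        = doubleMul₂ (fun q => doubleComul x (q.2, q.1)) doubleR) ∧
    -- `(Δ ⊗ id)(R) = R₁₃ R₂₃`
    ((fun t : (G × G) × (G × G) × (G × G) =>
        if t.1.2 = t.2.1.2 then doubleR (K := K) ((t.1.1 * t.2.1.1, t.1.2), t.2.2) else 0)
      = doubleMul₃ (fun t => doubleR (t.1, t.2.2) * doubleOne t.2.1)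
          (fun t => doubleOne t.1 * doubleR (t.2.1, t.2.2))) ∧
    -- `(id ⊗ Δ)(R) = R₁₃ R₁₂`
    ((fun t : (G × G) × (G × G) × (G × G) =>
        if t.2.1.2 = t.2.2.2 then doubleR (K := K) (t.1, (t.2.1.1 * t.2.2.1, t.2.1.2)) else 0)
      = doubleMul₃ (fun t => doubleR (t.1, t.2.2) * doubleOne t.2.1)
          (fun t => doubleR (t.1, t.2.1) * doubleOne t.2.2)) := by
  exact ⟨⟨doubleRInv, doubleR_mul_doubleRInv, doubleRInv_mul_doubleR⟩, doubleR_mul_doubleComul,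
    doubleComul_tensor_id_doubleR, id_tensor_doubleComul_doubleR⟩
end

section
/- The element θ = ∑_{g∈G} δ_g ⊗ g⁻¹ is a central invertible element of the Drinfel'd double D(G), i.e., θ x = x θ for all x ∈ D(G), with inverse θ⁻¹ = ∑_{g∈G} δ_g ⊗ g. -/
open Finset

/-- Product of the Drinfel'd double `D(G)` (functions `G × G → K`, `x (g,h)` being the
coefficient of `δ_g ⊗ h`): `(δ_g ⊗ h)(δ_{g'} ⊗ h') = δ_{g, h g' h⁻¹}(δ_g ⊗ hh')`. -/
def doubleMul {K G : Type*} [Field K] [Group G] [Fintype G] [DecidableEq G]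
    (x y : G × G → K) : G × G → K :=
  fun p => ∑ h : G, x (p.1, h) * y (h⁻¹ * p.1 * h, h⁻¹ * p.2)

/-- The ribbon element `θ = ∑_g δ_g ⊗ g⁻¹` of `D(G)`. -/
def doubleTheta {K G : Type*} [Field K] [Group G] [DecidableEq G] : G × G → K :=
  fun p => if p.2 = p.1⁻¹ then 1 else 0

/-- The element `∑_g δ_g ⊗ g` of `D(G)`. -/
def doubleThetaInv {K G : Type*} [Field K] [Group G] [DecidableEq G] : G × G → K :=
  fun p => if p.2 = p.1 then 1 else 0

/-!
Both `θ` and `θ⁻¹` have the form `∑_g δ_g ⊗ f g`, and multiplying by such an element only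
reindexes coefficients: on the left by `(g, k) ↦ ((f g)⁻¹ g (f g), (f g)⁻¹ k)`, and on the right,
when `f` commutes with conjugation (as inversion does), by `(g, k) ↦ (g, (f g)⁻¹ k)`. For
`f = (·⁻¹)` the two reindexings agree, which gives centrality, and those for `(·⁻¹)` and `id`
are mutually inverse.
-/

namespace DrinfeldDouble

variable {K G : Type*} [Field K] [Group G] [DecidableEq G]

/-- The element `∑_g δ_g ⊗ f g` of `D(G)`. -/
def ofFun (f : G → G) : G × G → K :=
  fun p => if p.2 = f p.1 then 1 else 0

theorem doubleTheta_eq_ofFun : (doubleTheta : G × G → K) = ofFun (·⁻¹) := rfl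

theorem doubleThetaInv_eq_ofFun : (doubleThetaInv : G × G → K) = ofFun id := rfl

variable [Fintype G]

theorem doubleMul_ofFun_left (f : G → G) (y : G × G → K) :
    doubleMul (ofFun f) y = fun p => y ((f p.1)⁻¹ * p.1 * f p.1, (f p.1)⁻¹ * p.2) := by
  funext p
  rw [doubleMul, Fintype.sum_eq_single (f p.1) fun h hh => by simp [ofFun, hh]]
  simp [ofFun]

theorem doubleMul_ofFun_right (f : G → G) (hf : ∀ g h : G, f (h⁻¹ * g * h) = h⁻¹ * f g * h)
    (x : G × G → K) :
    doubleMul x (ofFun f) = fun p => x (p.1, (f p.1)⁻¹ * p.2) := by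
  funext p
  have hsupp : ∀ h : G, h⁻¹ * p.2 = f (h⁻¹ * p.1 * h) ↔ h = (f p.1)⁻¹ * p.2 := fun h => by
    rw [hf, mul_assoc, mul_right_inj, eq_inv_mul_iff_mul_eq, eq_comm]
  rw [doubleMul, Fintype.sum_eq_single ((f p.1)⁻¹ * p.2) fun h hh => by
    simp only [ofFun, hsupp, hh, if_false, mul_zero]]
  simp only [ofFun, hsupp, if_true, mul_one]

end DrinfeldDouble

open DrinfeldDouble in
/-- The element `θ = ∑_g δ_g ⊗ g⁻¹` is a central invertible element of the Drinfel'd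
double `D(G)`, with inverse `θ⁻¹ = ∑_g δ_g ⊗ g`. -/
theorem double_theta_central_invertible {K G : Type*} [Field K] [Group G] [Fintype G]
    [DecidableEq G] :
    (∀ x : G × G → K, doubleMul doubleTheta x = doubleMul x doubleTheta) ∧
    doubleMul (doubleTheta : G × G → K) doubleThetaInv = doubleOne ∧
    doubleMul (doubleThetaInv : G × G → K) doubleTheta = doubleOne := by
  refine ⟨fun x => ?_, ?_, ?_⟩
  · rw [doubleTheta_eq_ofFun, doubleMul_ofFun_left,
      doubleMul_ofFun_right _ fun g h => by group]
    simp
  · funext p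
    simp [doubleTheta_eq_ofFun, doubleThetaInv_eq_ofFun, doubleMul_ofFun_left, ofFun, doubleOne]
  · funext p
    simp [doubleTheta_eq_ofFun, doubleThetaInv_eq_ofFun, doubleMul_ofFun_left, ofFun, doubleOne]
end

section
/- Let a finite group G act on a finite set M, and let K be an algebraically closed field of characteristic zero (or not dividing |G|). For irreducible finite-dimensional representations of the action groupoid M//G (i.e., M-graded vector spaces V = ⊕_{m∈M}V_m with G-action satisfying g·V_m ⊆ V_{g·m}) with characters χ(m,g) := Tr(ρ(g)P(m)), the characters of non-isomorphic irreducibles are orthogonal and each has unit length with respect to the form ⟨f,f'⟩ = (1/|G|) ∑_{g∈G, m∈M} f(m,g⁻¹) f'(m,g). -/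
open Finset

/-- A finite-dimensional `K`-linear representation of the action groupoid `M//G`:
a `K`-vector space with a grading by `M` (given by a complete family of orthogonal
projections `P m`) and a `G`-action `ρ` satisfying `ρ(g) V_m ⊆ V_{g•m}`. -/
structure AGRep (K M G : Type) [Field K] [Fintype M] [Group G] [MulAction G M] where
  carrier : Type
  [acg : AddCommGroup carrier]
  [mod : Module K carrier]
  [fd : FiniteDimensional K carrier]
  P : M → Module.End K carrier
  rho : G →* Module.End K carrier
  proj_idem : ∀ m, P m * P m = P m
  proj_orth : ∀ m n, m ≠ n → P m * P n = 0
  proj_sum : ∑ m : M, P m = 1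
  compat : ∀ (g : G) (m : M), rho g * P m = P (g • m) * rho g

attribute [instance] AGRep.acg AGRep.mod AGRep.fd

variable {K M G : Type} [Field K] [Fintype M] [Group G] [MulAction G M]

/-- The character `χ(m,g) = Tr(ρ(g) P(m))` of a representation of `M//G`. -/
noncomputable def AGRep.char (R : AGRep K M G) (p : M × G) : K :=
  LinearMap.trace K R.carrier (R.rho p.2 * R.P p.1)

/-- Irreducibility: no proper nonzero graded invariant subspace. -/
def AGRep.Irreducible (R : AGRep K M G) : Prop :=
  Nontrivial R.carrier ∧
    ∀ U : Submodule K R.carrier,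
      (∀ g : G, U.map (R.rho g) ≤ U) → (∀ m : M, U.map (R.P m) ≤ U) →
        U = ⊥ ∨ U = ⊤

/-- Isomorphism of representations of `M//G`: a grade-preserving equivariant linear
equivalence. -/
def AGRep.Iso (R S : AGRep K M G) : Prop :=
  ∃ e : R.carrier ≃ₗ[K] S.carrier,
    (∀ (g : G) (v : R.carrier), e (R.rho g v) = S.rho g (e v)) ∧
    (∀ (m : M) (v : R.carrier), e (R.P m v) = S.P m (e v))

/-!
The sum `∑_{g,m} χ_S(m,g⁻¹) χ_R(m,g)` is the trace of the averaging operator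
`f ↦ ∑_{g,m} ρ_S(g⁻¹) P_S(m) f P_R(m) ρ_R(g)` on `Hom(R,S)`, since `f ↦ A f B` has trace
`tr A · tr B`. Divided by `|G|`, this operator is a projection onto the grade-preserving
equivariant maps, so the normalised sum is the dimension of that space. By Schur's lemma this
dimension is `0` for non-isomorphic irreducibles and `1` for `R = S` over an algebraically
closed field.
-/

open scoped TensorProduct

namespace LinearMap

section
variable {R V W U : Type*} [CommSemiring R] [AddCommMonoid V] [Module R V] [AddCommMonoid W]
  [Module R W] [AddCommMonoid U] [Module R U]

theorem comp_finsetSum {ι : Type*} (s : Finset ι) (g : W →ₗ[R] U) (f : ι → V →ₗ[R] W) :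
    g ∘ₗ ∑ i ∈ s, f i = ∑ i ∈ s, g ∘ₗ f i :=
  map_sum (llcomp R V W U g) f s

theorem finsetSum_comp {ι : Type*} (s : Finset ι) (f : ι → W →ₗ[R] U) (g : V →ₗ[R] W) :
    (∑ i ∈ s, f i) ∘ₗ g = ∑ i ∈ s, f i ∘ₗ g :=
  map_sum (lcomp R U g) f s

end

variable {R V W : Type*} [CommRing R] [AddCommGroup V] [Module R V] [Module.Free R V]
  [Module.Finite R V] [AddCommGroup W] [Module R W] [Module.Free R W] [Module.Finite R W]

-- Under `Hom(V, W) ≃ V* ⊗ W`, the map `f ↦ A ∘ f ∘ B` becomes `Bᵀ ⊗ A`.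
theorem trace_llcomp_comp_lcomp (A : Module.End R W) (B : Module.End R V) :
    trace R (V →ₗ[R] W) (llcomp R V W W A ∘ₗ lcomp R W B) = trace R W A * trace R V B := by
  have h : llcomp R V W W A ∘ₗ lcomp R W B =
      (dualTensorHomEquiv R V W).conj (TensorProduct.map (Module.Dual.transpose B) A) := by
    rw [LinearEquiv.conj_apply, LinearEquiv.eq_comp_toLinearMap_symm]
    ext φ w v
    simp [dualTensorHomEquiv, Module.Dual.transpose]
  rw [h, trace_conj' (M := Module.Dual R V ⊗[R] W) (N := V →ₗ[R] W), trace_tensorProduct',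
    trace_transpose', mul_comm]

end LinearMap

open LinearMap

namespace AGRep

section
variable (R S : AGRep K M G)

lemma rho_comp_P (g : G) (m : M) : R.rho g ∘ₗ R.P m = R.P (g • m) ∘ₗ R.rho g :=
  R.compat g m

lemma P_comp_rho_inv (g : G) (m : M) : R.P m ∘ₗ R.rho g⁻¹ = R.rho g⁻¹ ∘ₗ R.P (g • m) := by
  have h := R.compat g⁻¹ (g • m)
  rw [inv_smul_smul] at h
  exact h.symm

def intertwiners : Submodule K (R.carrier →ₗ[K] S.carrier) where
  carrier := {f | (∀ g, f ∘ₗ R.rho g = S.rho g ∘ₗ f) ∧ ∀ m, f ∘ₗ R.P m = S.P m ∘ₗ f}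
  add_mem' {f f'} hf hf' :=
    ⟨fun g => by rw [add_comp, comp_add, hf.1, hf'.1],
     fun m => by rw [add_comp, comp_add, hf.2, hf'.2]⟩
  zero_mem' := ⟨fun g => by rw [zero_comp, comp_zero], fun m => by rw [zero_comp, comp_zero]⟩
  smul_mem' c f hf :=
    ⟨fun g => by rw [smul_comp, comp_smul, hf.1], fun m => by rw [smul_comp, comp_smul, hf.2]⟩

noncomputable def gradedPart (f : R.carrier →ₗ[K] S.carrier) : R.carrier →ₗ[K] S.carrier :=
  ∑ m, S.P m ∘ₗ f ∘ₗ R.P m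

lemma P_comp_gradedPart (f : R.carrier →ₗ[K] S.carrier) (n : M) :
    S.P n ∘ₗ gradedPart R S f = S.P n ∘ₗ f ∘ₗ R.P n := by
  rw [gradedPart, comp_finsetSum, Finset.sum_eq_single n]
  · rw [← comp_assoc, ← Module.End.mul_eq_comp, S.proj_idem]
  · intro m _ hmn
    rw [← comp_assoc, ← Module.End.mul_eq_comp, S.proj_orth n m (Ne.symm hmn), zero_comp]
  · simp

lemma gradedPart_comp_P (f : R.carrier →ₗ[K] S.carrier) (n : M) :
    gradedPart R S f ∘ₗ R.P n = S.P n ∘ₗ f ∘ₗ R.P n := by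
  rw [gradedPart, finsetSum_comp, Finset.sum_eq_single n]
  · rw [comp_assoc, comp_assoc, ← Module.End.mul_eq_comp (R.P n), R.proj_idem]
  · intro m _ hmn
    rw [comp_assoc, comp_assoc, ← Module.End.mul_eq_comp (R.P m), R.proj_orth m n hmn,
      comp_zero, comp_zero]
  · simp

lemma gradedPart_eq_self {f : R.carrier →ₗ[K] S.carrier} (hf : ∀ m, f ∘ₗ R.P m = S.P m ∘ₗ f) :
    gradedPart R S f = f := by
  simp_rw [gradedPart, ← comp_assoc, ← hf, comp_assoc, ← Module.End.mul_eq_comp, R.proj_idem,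
    ← comp_finsetSum, R.proj_sum, Module.End.one_eq_id, comp_id]

variable [Fintype G]

noncomputable def groupAverage (f : R.carrier →ₗ[K] S.carrier) : R.carrier →ₗ[K] S.carrier :=
  ∑ g, S.rho g⁻¹ ∘ₗ f ∘ₗ R.rho g

lemma groupAverage_comp_rho (f : R.carrier →ₗ[K] S.carrier) (h : G) :
    groupAverage R S f ∘ₗ R.rho h = S.rho h ∘ₗ groupAverage R S f := by
  rw [groupAverage, finsetSum_comp, comp_finsetSum]
  refine Fintype.sum_equiv (Equiv.mulRight h) _ _ fun g => ?_
  have hg : h * (g * h)⁻¹ = g⁻¹ := by group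
  rw [Equiv.coe_mulRight, ← comp_assoc _ _ (S.rho h), ← Module.End.mul_eq_comp, ← map_mul, hg,
    comp_assoc, comp_assoc, ← Module.End.mul_eq_comp (R.rho g), ← map_mul]

lemma groupAverage_comp_P (f : R.carrier →ₗ[K] S.carrier) (hf : ∀ m, f ∘ₗ R.P m = S.P m ∘ₗ f)
    (n : M) : groupAverage R S f ∘ₗ R.P n = S.P n ∘ₗ groupAverage R S f := by
  rw [groupAverage, finsetSum_comp, comp_finsetSum]
  refine Finset.sum_congr rfl fun g _ => ?_
  rw [comp_assoc, comp_assoc, rho_comp_P, ← comp_assoc _ (S.rho g⁻¹) (S.P n),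
    P_comp_rho_inv, ← comp_assoc (R.rho g) _ f, hf]
  simp only [comp_assoc]

lemma groupAverage_eq_card_smul {f : R.carrier →ₗ[K] S.carrier}
    (hf : ∀ g, f ∘ₗ R.rho g = S.rho g ∘ₗ f) : groupAverage R S f = Fintype.card G • f := by
  simp_rw [groupAverage, hf, ← comp_assoc, ← Module.End.mul_eq_comp, ← map_mul,
    inv_mul_cancel, map_one, Module.End.one_eq_id, id_comp, Finset.sum_const, Finset.card_univ]

noncomputable def averagingMap : Module.End K (R.carrier →ₗ[K] S.carrier) :=
  ∑ g : G, ∑ m : M, llcomp K _ _ _ (S.rho g⁻¹ * S.P m) ∘ₗ lcomp K _ (R.P m * R.rho g)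

lemma averagingMap_apply (f : R.carrier →ₗ[K] S.carrier) :
    averagingMap R S f = groupAverage R S (gradedPart R S f) := by
  simp [averagingMap, groupAverage, gradedPart, comp_finsetSum, finsetSum_comp,
    LinearMap.sum_apply, Module.End.mul_eq_comp, comp_assoc, llcomp_apply', lcomp_apply']

lemma trace_averagingMap :
    trace K _ (averagingMap R S) = ∑ g : G, ∑ m : M, S.char (m, g⁻¹) * R.char (m, g) := by
  simp only [averagingMap, map_sum, trace_llcomp_comp_lcomp, char, trace_mul_comm K (R.P _)]

lemma averagingMap_mem_intertwiners (f : R.carrier →ₗ[K] S.carrier) :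
    averagingMap R S f ∈ intertwiners R S := by
  rw [averagingMap_apply]
  exact ⟨groupAverage_comp_rho R S _, groupAverage_comp_P R S _ fun n =>
    (gradedPart_comp_P R S f n).trans (P_comp_gradedPart R S f n).symm⟩

lemma averagingMap_apply_of_mem {f : R.carrier →ₗ[K] S.carrier} (hf : f ∈ intertwiners R S) :
    averagingMap R S f = Fintype.card G • f := by
  rw [averagingMap_apply, gradedPart_eq_self R S hf.2, groupAverage_eq_card_smul R S hf.1]

lemma isProj_inv_card_smul_averagingMap (hG : (Fintype.card G : K) ≠ 0) :
    IsProj (intertwiners R S) ((Fintype.card G : K)⁻¹ • averagingMap R S) where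
  map_mem f := Submodule.smul_mem _ _ (averagingMap_mem_intertwiners R S f)
  map_id f hf := by
    rw [LinearMap.smul_apply, averagingMap_apply_of_mem R S hf, ← Nat.cast_smul_eq_nsmul K,
      smul_smul, inv_mul_cancel₀ hG, one_smul]

theorem inv_card_mul_sum_char_mul_char_eq_finrank (hG : (Fintype.card G : K) ≠ 0) :
    (Fintype.card G : K)⁻¹ * ∑ g : G, ∑ m : M, S.char (m, g⁻¹) * R.char (m, g) =
      Module.finrank K (intertwiners R S) := by
  rw [← trace_averagingMap, ← smul_eq_mul, ← map_smul,
    (isProj_inv_card_smul_averagingMap R S hG).trace]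

end

variable {R S : AGRep K M G}

lemma Irreducible.ker_eq_bot_or_eq_top (hR : R.Irreducible) {f : R.carrier →ₗ[K] S.carrier}
    (hf : f ∈ intertwiners R S) : ker f = ⊥ ∨ ker f = ⊤ :=
  hR.2 _ (fun g => by
      rw [Submodule.map_le_iff_le_comap, ← ker_comp, hf.1]
      exact ker_le_ker_comp _ _)
    (fun m => by
      rw [Submodule.map_le_iff_le_comap, ← ker_comp, hf.2]
      exact ker_le_ker_comp _ _)

lemma Irreducible.range_eq_bot_or_eq_top (hS : S.Irreducible) {f : R.carrier →ₗ[K] S.carrier}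
    (hf : f ∈ intertwiners R S) : range f = ⊥ ∨ range f = ⊤ :=
  hS.2 _ (fun g => by
      rw [← range_comp, ← hf.1]
      exact range_comp_le_range _ _)
    (fun m => by
      rw [← range_comp, ← hf.2]
      exact range_comp_le_range _ _)

lemma iso_of_mem_intertwiners {f : S.carrier →ₗ[K] R.carrier} (hf : f ∈ intertwiners S R)
    (hbij : Function.Bijective f) : R.Iso S := by
  let e := LinearEquiv.ofBijective f hbij
  have he : ∀ v, e v = f v := fun _ => rfl
  refine ⟨e.symm, fun g v => e.injective ?_, fun m v => e.injective ?_⟩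
  · rw [e.apply_symm_apply, he, ← comp_apply, hf.1, comp_apply, ← he, e.apply_symm_apply]
  · rw [e.apply_symm_apply, he, ← comp_apply, hf.2, comp_apply, ← he, e.apply_symm_apply]

theorem intertwiners_eq_bot_of_not_iso (hR : R.Irreducible) (hS : S.Irreducible)
    (h : ¬ R.Iso S) : intertwiners S R = ⊥ := by
  refine (Submodule.eq_bot_iff _).2 fun f hf => by_contra fun hf0 => h ?_
  have hker := (hS.ker_eq_bot_or_eq_top hf).resolve_right (mt ker_eq_top.1 hf0)
  have hrange := (hR.range_eq_bot_or_eq_top hf).resolve_left (mt range_eq_bot.1 hf0)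
  exact iso_of_mem_intertwiners hf ⟨ker_eq_bot.1 hker, range_eq_top.1 hrange⟩

lemma one_mem_intertwiners : (1 : Module.End K R.carrier) ∈ intertwiners R R :=
  ⟨fun g => by rw [Module.End.one_eq_id, id_comp, comp_id],
    fun m => by rw [Module.End.one_eq_id, id_comp, comp_id]⟩

theorem finrank_intertwiners_self [IsAlgClosed K] (hR : R.Irreducible) :
    Module.finrank K (intertwiners R R) = 1 := by
  have : Nontrivial R.carrier := hR.1
  refine (finrank_eq_one_iff_of_nonzero' ⟨1, one_mem_intertwiners⟩ ?_).2 fun ⟨f, hf⟩ => ?_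
  · simp
  obtain ⟨c, hc⟩ := Module.End.exists_eigenvalue f
  have hmem : f - c • 1 ∈ intertwiners R R :=
    sub_mem hf (Submodule.smul_mem _ c one_mem_intertwiners)
  have hker := (hR.ker_eq_bot_or_eq_top hmem).resolve_left
    (by rw [← Module.End.eigenspace_def]; exact Module.End.hasEigenvalue_iff.1 hc)
  exact ⟨c, Subtype.ext (sub_eq_zero.1 (ker_eq_top.1 hker)).symm⟩

end AGRep

/-- Orthogonality of characters: over an algebraically closed field of characteristic
zero, the characters of irreducible representations of the finite action groupoid
`M//G` are orthogonal and of unit length for the bilinear form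
`⟨f,f'⟩ = (1/|G|) ∑_{g,m} f(m,g⁻¹) f'(m,g)`. -/
theorem agRep_char_orthogonality [Fintype G] [IsAlgClosed K] [CharZero K]
    (R S : AGRep K M G) (hR : R.Irreducible) (hS : S.Irreducible) :
    (¬ R.Iso S →
      (Fintype.card G : K)⁻¹ *
        ∑ g : G, ∑ m : M, R.char (m, g⁻¹) * S.char (m, g) = 0) ∧
    (Fintype.card G : K)⁻¹ *
        ∑ g : G, ∑ m : M, R.char (m, g⁻¹) * R.char (m, g) = 1 := by
  have hG : (Fintype.card G : K) ≠ 0 := Nat.cast_ne_zero.2 Fintype.card_ne_zero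
  refine ⟨fun h => ?_, ?_⟩
  · rw [AGRep.inv_card_mul_sum_char_mul_char_eq_finrank S R hG,
      AGRep.intertwiners_eq_bot_of_not_iso hR hS h, finrank_bot, Nat.cast_zero]
  · rw [AGRep.inv_card_mul_sum_char_mul_char_eq_finrank R R hG,
      AGRep.finrank_intertwiners_self hR, Nat.cast_one]
end

section
/- Let a finite group G act on a finite set M, and K an algebraically closed field of characteristic zero. If (V_i)_{i∈I} is a complete set of representatives of isomorphism classes of irreducible representations of the action groupoid M//G with dimensions d_i = dim_K V_i, then ∑_{i∈I} d_i² = |M|·|G|. -/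
/-!
Every representation of `M//G` is semisimple: averaging an arbitrary projection onto an invariant
subspace over `G`, and then compressing it by the grading projections `P m`, which `G` permutes,
gives an equivariant one. With Schur's lemma this yields `dim R = ∑ᵢ dᵢ · dim Hom(Vᵢ, R)` for
every representation `R`. A homomorphism from `V` into the regular representation is determined
by its coefficients at the identity of `G`, so `Hom(V, K(M) ⊗ K[G]) ≅ V*`, and for `R` regular
the formula reads `|M| · |G| = ∑ᵢ dᵢ²`.
-/

open Finset

variable {K M G : Type} [Field K] [Fintype M] [Group G] [MulAction G M]

open Module

theorem LinearMap.IsProj.sum_mul_mul {S E ι : Type*} [Semiring S] [AddCommMonoid E]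
    [Module S E] [Fintype ι] {U : Submodule S E} {π : Module.End S E} (hπ : IsProj U π)
    {a b : ι → Module.End S E} (ha : ∀ i, ∀ x ∈ U, a i x ∈ U) (hb : ∀ i, ∀ x ∈ U, b i x ∈ U)
    (hab : ∑ i, a i * b i = 1) : IsProj U (∑ i, a i * π * b i) where
  map_mem x := by
    simpa using U.sum_mem fun i _ => ha i _ (hπ.map_mem (b i x))
  map_id x hx := by
    simpa [hπ.map_id _ (hb _ x hx)] using LinearMap.congr_fun hab x

theorem MonoidHom.commute_sum_mul_mul_inv {G A : Type*} [Group G] [Fintype G] [Semiring A]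
    (ρ : G →* A) (x : A) (h : G) : Commute (ρ h) (∑ g, ρ g * x * ρ g⁻¹) := by
  simp only [Commute, SemiconjBy, Finset.mul_sum, Finset.sum_mul]
  refine Fintype.sum_equiv (Equiv.mulLeft h) _ _ fun g => ?_
  simp only [Equiv.coe_mulLeft, mul_inv_rev, map_mul, mul_assoc]
  rw [← map_mul ρ h⁻¹, inv_mul_cancel, map_one, mul_one]

theorem Submodule.commute_projection {S E : Type*} [Ring S] [AddCommGroup E] [Module S E]
    {U W : Submodule S E} (h : IsCompl U W) {T : Module.End S E} (hU : U.map T ≤ U)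
    (hW : W.map T ≤ W) : Commute T (U.projection W h) := by
  refine ((LinearMap.IsIdempotentElem.commute_iff (U.isIdempotentElem_projection h)).mpr
    ⟨?_, ?_⟩).symm
  · rwa [Submodule.range_projection, Module.End.mem_invtSubmodule_iff_map_le]
  · rwa [Submodule.ker_projection, Module.End.mem_invtSubmodule_iff_map_le]

namespace AGRep

section Basic

variable (R : AGRep K M G)

@[simp] lemma P_P_apply (m : M) (v : R.carrier) : R.P m (R.P m v) = R.P m v :=
  LinearMap.congr_fun (R.proj_idem m) v

lemma P_P_apply_of_ne {m n : M} (h : m ≠ n) (v : R.carrier) : R.P m (R.P n v) = 0 :=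
  LinearMap.congr_fun (R.proj_orth m n h) v

lemma rho_P_apply (g : G) (m : M) (v : R.carrier) :
    R.rho g (R.P m v) = R.P (g • m) (R.rho g v) :=
  LinearMap.congr_fun (R.compat g m) v

lemma sum_P_apply (v : R.carrier) : ∑ m : M, R.P m v = v := by
  simpa using LinearMap.congr_fun R.proj_sum v

def IsInvariant (U : Submodule K R.carrier) : Prop :=
  (∀ g : G, U.map (R.rho g) ≤ U) ∧ ∀ m : M, U.map (R.P m) ≤ U

variable {R} {U : Submodule K R.carrier}

lemma IsInvariant.rho_mem (hU : R.IsInvariant U) (g : G) {x : R.carrier} (hx : x ∈ U) :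
    R.rho g x ∈ U :=
  hU.1 g (Submodule.mem_map_of_mem hx)

lemma IsInvariant.P_mem (hU : R.IsInvariant U) (m : M) {x : R.carrier} (hx : x ∈ U) :
    R.P m x ∈ U :=
  hU.2 m (Submodule.mem_map_of_mem hx)

lemma exists_isInvariant_ne_bot_ne_top [Nontrivial R.carrier] (hR : ¬ R.Irreducible) :
    ∃ U, R.IsInvariant U ∧ U ≠ ⊥ ∧ U ≠ ⊤ := by
  by_contra! h
  exact hR ⟨inferInstance, fun U hg hP => or_iff_not_imp_left.mpr (h U ⟨hg, hP⟩)⟩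

def subrep (R : AGRep K M G) (U : Submodule K R.carrier) (hU : R.IsInvariant U) :
    AGRep K M G where
  carrier := U
  P m := (R.P m).restrict fun _ => hU.P_mem m
  rho :=
    { toFun g := (R.rho g).restrict fun _ => hU.rho_mem g
      map_one' := by ext; simp
      map_mul' g h := by ext; simp }
  proj_idem m := by ext; simp [P_P_apply]
  proj_orth m n hmn := by ext; simp [P_P_apply_of_ne _ hmn]
  proj_sum := by ext; simp [sum_P_apply]
  compat g m := by ext; simp [rho_P_apply]

end Basic

section Hom

variable {R S T : AGRep K M G}

def homSpace (R S : AGRep K M G) : Submodule K (R.carrier →ₗ[K] S.carrier) where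
  carrier := {f | (∀ (g : G) (v : R.carrier), f (R.rho g v) = S.rho g (f v)) ∧
      ∀ (m : M) (v : R.carrier), f (R.P m v) = S.P m (f v)}
  add_mem' hf hh := ⟨fun g v => by simp [hf.1, hh.1], fun m v => by simp [hf.2, hh.2]⟩
  zero_mem' := ⟨fun g v => by simp, fun m v => by simp⟩
  smul_mem' c _ hf := ⟨fun g v => by simp [hf.1], fun m v => by simp [hf.2]⟩

lemma one_mem_homSpace : (1 : Module.End K R.carrier) ∈ homSpace R R :=
  ⟨fun _ _ => rfl, fun _ _ => rfl⟩

lemma comp_mem_homSpace {φ : S.carrier →ₗ[K] T.carrier} {f : R.carrier →ₗ[K] S.carrier}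
    (hφ : φ ∈ homSpace S T) (hf : f ∈ homSpace R S) : φ ∘ₗ f ∈ homSpace R T :=
  ⟨fun g v => by simp [hf.1, hφ.1], fun m v => by simp [hf.2, hφ.2]⟩

lemma symm_mem_homSpace (e : S.carrier ≃ₗ[K] T.carrier)
    (he : (e : S.carrier →ₗ[K] T.carrier) ∈ homSpace S T) :
    (e.symm : T.carrier →ₗ[K] S.carrier) ∈ homSpace T S :=
  ⟨fun g v => e.injective (by simpa using (he.1 g (e.symm v)).symm),
    fun m v => e.injective (by simpa using (he.2 m (e.symm v)).symm)⟩

variable (R) in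
def postcomp (φ : S.carrier →ₗ[K] T.carrier) (hφ : φ ∈ homSpace S T) :
    homSpace R S →ₗ[K] homSpace R T :=
  (LinearMap.llcomp K R.carrier S.carrier T.carrier φ).restrict fun _ hf =>
    comp_mem_homSpace hφ hf

@[simp] lemma coe_postcomp_apply (φ : S.carrier →ₗ[K] T.carrier) (hφ : φ ∈ homSpace S T)
    (f : homSpace R S) : (postcomp R φ hφ f : R.carrier →ₗ[K] T.carrier) = φ ∘ₗ f :=
  rfl

lemma finrank_homSpace_congr_right (h : S.Iso T) :
    finrank K (homSpace R S) = finrank K (homSpace R T) := by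
  obtain ⟨e, he⟩ : ∃ e : S.carrier ≃ₗ[K] T.carrier,
    (e : S.carrier →ₗ[K] T.carrier) ∈ homSpace S T := h
  exact LinearEquiv.finrank_eq <| .ofLinearMap (postcomp R e he)
    (postcomp R e.symm (symm_mem_homSpace e he)) (by ext; simp) (by ext; simp)

end Hom

section Schur

variable {R S : AGRep K M G} {f : R.carrier →ₗ[K] S.carrier}

lemma isInvariant_ker (hf : f ∈ homSpace R S) : R.IsInvariant (LinearMap.ker f) :=
  ⟨fun g => by rintro _ ⟨v, hv, rfl⟩; simp_all [hf.1],
    fun m => by rintro _ ⟨v, hv, rfl⟩; simp_all [hf.2]⟩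

lemma isInvariant_range (hf : f ∈ homSpace R S) : S.IsInvariant (LinearMap.range f) :=
  ⟨fun g => by rintro _ ⟨_, ⟨v, rfl⟩, rfl⟩; exact ⟨R.rho g v, hf.1 g v⟩,
    fun m => by rintro _ ⟨_, ⟨v, rfl⟩, rfl⟩; exact ⟨R.P m v, hf.2 m v⟩⟩

lemma eq_zero_or_injective (hR : R.Irreducible) (hf : f ∈ homSpace R S) :
    f = 0 ∨ Function.Injective f := by
  rcases hR.2 _ (isInvariant_ker hf).1 (isInvariant_ker hf).2 with h | h
  · exact .inr (LinearMap.ker_eq_bot.mp h)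
  · exact .inl (LinearMap.ker_eq_top.mp h)

lemma eq_zero_or_surjective (hS : S.Irreducible) (hf : f ∈ homSpace R S) :
    f = 0 ∨ Function.Surjective f := by
  rcases hS.2 _ (isInvariant_range hf).1 (isInvariant_range hf).2 with h | h
  · exact .inl (LinearMap.range_eq_bot.mp h)
  · exact .inr (LinearMap.range_eq_top.mp h)

lemma iso_of_mem_homSpace (hR : R.Irreducible) (hS : S.Irreducible) (hf : f ∈ homSpace R S)
    (hne : f ≠ 0) : R.Iso S :=
  ⟨.ofBijective f ⟨(eq_zero_or_injective hR hf).resolve_left hne,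
    (eq_zero_or_surjective hS hf).resolve_left hne⟩, hf⟩

lemma homSpace_eq_bot (hR : R.Irreducible) (hS : S.Irreducible) (h : ¬ R.Iso S) :
    homSpace R S = ⊥ :=
  (Submodule.eq_bot_iff _).mpr fun _ hf => by_contra fun hne => h (iso_of_mem_homSpace hR hS hf hne)

lemma homSpace_self_eq_span_one [IsAlgClosed K] (hR : R.Irreducible) :
    homSpace R R = K ∙ (1 : Module.End K R.carrier) := by
  refine le_antisymm (fun f hf => ?_) ((Submodule.span_singleton_le_iff_mem _ _).mpr
    one_mem_homSpace)
  have := hR.1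
  obtain ⟨c, hc⟩ := Module.End.exists_eigenvalue f
  have hmem : f - c • 1 ∈ homSpace R R := sub_mem hf (Submodule.smul_mem _ c one_mem_homSpace)
  obtain h | h := eq_zero_or_injective hR hmem
  · exact Submodule.mem_span_singleton.mpr ⟨c, (sub_eq_zero.mp h).symm⟩
  · exact (Module.End.hasEigenvalue_iff.mp hc).elim
      (by rw [Module.End.eigenspace_def, LinearMap.ker_eq_bot.mpr h])

lemma finrank_homSpace_self [IsAlgClosed K] (hR : R.Irreducible) :
    finrank K (homSpace R R) = 1 := by
  have := hR.1
  rw [homSpace_self_eq_span_one hR, finrank_span_singleton]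
  exact one_ne_zero (α := Module.End K R.carrier)

end Schur

section Maschke

variable {R : AGRep K M G}

lemma mem_homSpace_self_iff {π : Module.End K R.carrier} : π ∈ homSpace R R ↔
    (∀ g : G, Commute (R.rho g) π) ∧ ∀ m : M, Commute (R.P m) π := by
  refine and_congr (forall_congr' fun g => ?_) (forall_congr' fun m => ?_) <;>
    simp [Commute, SemiconjBy, LinearMap.ext_iff, eq_comm]

lemma commute_P_sum_P_mul_P (π : Module.End K R.carrier) (n : M) :
    Commute (R.P n) (∑ m, R.P m * π * R.P m) := by
  have hl : R.P n * ∑ m, R.P m * π * R.P m = R.P n * π * R.P n := by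
    rw [Finset.mul_sum, Finset.sum_eq_single n (fun m _ hm => ?_) (by simp)]
    · rw [← mul_assoc, ← mul_assoc, R.proj_idem]
    · rw [← mul_assoc, ← mul_assoc, R.proj_orth n m hm.symm, zero_mul, zero_mul]
  have hr : (∑ m, R.P m * π * R.P m) * R.P n = R.P n * π * R.P n := by
    rw [Finset.sum_mul, Finset.sum_eq_single n (fun m _ hm => ?_) (by simp)]
    · rw [mul_assoc, R.proj_idem]
    · rw [mul_assoc, R.proj_orth m n hm, mul_zero]
  exact hl.trans hr.symm

lemma commute_rho_sum_P_mul_P {π : Module.End K R.carrier} {g : G} (hπ : Commute (R.rho g) π) :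
    Commute (R.rho g) (∑ m, R.P m * π * R.P m) := by
  have hconj : ∀ m, R.rho g * (R.P m * π * R.P m) = R.P (g • m) * π * R.P (g • m) * R.rho g := by
    intro m
    rw [← mul_assoc, ← mul_assoc, R.compat, mul_assoc _ (R.rho g), hπ.eq, ← mul_assoc,
      mul_assoc _ (R.rho g), R.compat, ← mul_assoc]
  simp only [Commute, SemiconjBy, Finset.mul_sum, Finset.sum_mul, hconj]
  exact Fintype.sum_equiv (MulAction.toPerm g) _ _ fun m => rfl

lemma exists_isProj_mem_homSpace [Fintype G] [Invertible (Fintype.card G : K)]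
    {U : Submodule K R.carrier} (hU : R.IsInvariant U) :
    ∃ π ∈ homSpace R R, LinearMap.IsProj U π := by
  obtain ⟨W, hW⟩ := U.exists_isCompl
  have hπ₀ : LinearMap.IsProj U (U.projection W hW) :=
    ⟨Submodule.projection_apply_mem hW, fun _ => Submodule.projection_apply_of_mem_left hW⟩
  set π₁ := ∑ g : G, (⅟(Fintype.card G : K) • R.rho g) * U.projection W hW * R.rho g⁻¹
  have hπ₁ : LinearMap.IsProj U π₁ := by
    refine hπ₀.sum_mul_mul (fun g x hx => U.smul_mem _ (hU.rho_mem g hx))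
      (fun g x hx => hU.rho_mem g⁻¹ hx) ?_
    simp only [smul_mul_assoc, ← map_mul, mul_inv_cancel, map_one, Finset.sum_const,
      Finset.card_univ]
    rw [← Nat.cast_smul_eq_nsmul K, smul_smul, mul_invOf_self, one_smul]
  have hπ₁ρ : ∀ g, Commute (R.rho g) π₁ := by
    intro g
    simp only [π₁, smul_mul_assoc, ← Finset.smul_sum]
    exact (R.rho.commute_sum_mul_mul_inv _ g).smul_right _
  refine ⟨∑ m, R.P m * π₁ * R.P m, mem_homSpace_self_iff.mpr
    ⟨fun g => commute_rho_sum_P_mul_P (hπ₁ρ g), commute_P_sum_P_mul_P π₁⟩,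
    hπ₁.sum_mul_mul (fun m _ => hU.P_mem m) (fun m _ => hU.P_mem m) ?_⟩
  simp [R.proj_idem, R.proj_sum]

theorem exists_isCompl_isInvariant [Fintype G] [Invertible (Fintype.card G : K)]
    {U : Submodule K R.carrier} (hU : R.IsInvariant U) :
    ∃ W, R.IsInvariant W ∧ IsCompl U W := by
  obtain ⟨π, hπ, hπU⟩ := exists_isProj_mem_homSpace hU
  exact ⟨_, isInvariant_ker hπ, hπU.isCompl⟩

end Maschke

section Split

variable {V R S : AGRep K M G} {U W : Submodule K R.carrier}

lemma subtype_mem_homSpace (hU : R.IsInvariant U) : U.subtype ∈ homSpace (R.subrep U hU) R :=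
  ⟨fun _ _ => rfl, fun _ _ => rfl⟩

lemma codRestrict_mem_homSpace {φ : S.carrier →ₗ[K] R.carrier} (hφ : φ ∈ homSpace S R)
    (hU : R.IsInvariant U) (hφU : ∀ v, φ v ∈ U) :
    (φ.codRestrict U hφU : S.carrier →ₗ[K] (R.subrep U hU).carrier) ∈ homSpace S (R.subrep U hU) :=
  ⟨fun g v => Subtype.ext (hφ.1 g v), fun m v => Subtype.ext (hφ.2 m v)⟩

lemma projection_mem_homSpace (hU : R.IsInvariant U) (hW : R.IsInvariant W) (h : IsCompl U W) :
    U.projection W h ∈ homSpace R R :=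
  mem_homSpace_self_iff.mpr ⟨fun g => Submodule.commute_projection h (hU.1 g) (hW.1 g),
    fun m => Submodule.commute_projection h (hU.2 m) (hW.2 m)⟩

lemma finrank_homSpace_eq_add_of_isCompl (hU : R.IsInvariant U) (hW : R.IsInvariant W)
    (h : IsCompl U W) :
    finrank K (homSpace V R) =
      finrank K (homSpace V (R.subrep U hU)) + finrank K (homSpace V (R.subrep W hW)) := by
  let toProd := (postcomp V _ (codRestrict_mem_homSpace (projection_mem_homSpace hU hW h) hU
      (U.projection_apply_mem h))).prod
    (postcomp V _ (codRestrict_mem_homSpace (projection_mem_homSpace hW hU h.symm) hW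
      (W.projection_apply_mem h.symm)))
  let ofProd := (postcomp V _ (subtype_mem_homSpace hU)).coprod
    (postcomp V _ (subtype_mem_homSpace hW))
  rw [← finrank_prod, LinearEquiv.finrank_eq (.ofLinearMap toProd ofProd ?_ ?_)]
  · ext a v <;> apply Subtype.ext <;> simp only [toProd, ofProd, LinearMap.coe_comp,
      Function.comp_apply, LinearMap.inl_apply, LinearMap.inr_apply, LinearMap.coprod_apply,
      map_zero, add_zero, zero_add, LinearMap.prod_apply, LinearMap.id_apply]
    · exact U.projection_apply_of_mem_left h (a.1 v).2
    · exact W.projection_apply_of_mem_right h.symm (a.1 v).2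
    · exact U.projection_apply_of_mem_right h (a.1 v).2
    · exact W.projection_apply_of_mem_left h.symm (a.1 v).2
  · ext f v
    exact U.projection_add_projection_eq_self h (f.1 v)

end Split

section Decomposition

variable [IsAlgClosed K]
  {ι : Type} [Fintype ι] {V : ι → AGRep K M G} (hirr : ∀ i, (V i).Irreducible)
  (hdist : ∀ i j, i ≠ j → ¬ (V i).Iso (V j))
  (hcomp : ∀ W : AGRep K M G, W.Irreducible → ∃ i, W.Iso (V i))
include hirr hdist

lemma sum_finrank_mul_finrank_homSpace_of_iso {R : AGRep K M G} {j : ι} (hR : R.Iso (V j)) :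
    ∑ i, finrank K (V i).carrier * finrank K (homSpace (V i) R) = finrank K R.carrier := by
  obtain ⟨e, he⟩ := hR
  rw [e.finrank_eq, Finset.sum_eq_single j (fun i _ hij => ?_) (by simp),
    finrank_homSpace_congr_right ⟨e, he⟩, finrank_homSpace_self (hirr j), mul_one]
  rw [finrank_homSpace_congr_right ⟨e, he⟩, homSpace_eq_bot (hirr i) (hirr j) (hdist i j hij),
    finrank_bot, mul_zero]

include hcomp

theorem finrank_eq_sum_finrank_mul_finrank_homSpace [Fintype G]
    [Invertible (Fintype.card G : K)] (R : AGRep K M G) :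
    finrank K R.carrier = ∑ i, finrank K (V i).carrier * finrank K (homSpace (V i) R) := by
  induction hn : finrank K R.carrier using Nat.strong_induction_on generalizing R with
  | _ n ih =>
  subst hn
  by_cases hR : R.Irreducible
  · obtain ⟨j, hj⟩ := hcomp R hR
    exact (sum_finrank_mul_finrank_homSpace_of_iso hirr hdist hj).symm
  rcases subsingleton_or_nontrivial R.carrier with _ | _
  · simp [finrank_zero_of_subsingleton]
  obtain ⟨U, hU, hU_bot, hU_top⟩ := exists_isInvariant_ne_bot_ne_top hR
  obtain ⟨W, hW, hUW⟩ := exists_isCompl_isInvariant hU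
  have hW_top : W ≠ ⊤ := fun h => hU_bot (eq_bot_of_isCompl_top (h ▸ hUW))
  calc finrank K R.carrier = finrank K U + finrank K W :=
        (Submodule.finrank_add_eq_of_isCompl hUW).symm
    _ = _ := by
      rw [ih _ (Submodule.finrank_lt hU_top) (R.subrep U hU) rfl,
        ih _ (Submodule.finrank_lt hW_top) (R.subrep W hW) rfl, ← Finset.sum_add_distrib]
      simp_rw [← mul_add, ← finrank_homSpace_eq_add_of_isCompl hU hW hUW]

end Decomposition

section Regular

variable (K M G) [Fintype G] [DecidableEq M]

/-- `f (m, g)` is the coefficient of `δ_m ⊗ g`, which lies in degree `g • m`. -/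
noncomputable abbrev regular : AGRep K M G where
  carrier := M × G → K
  P n :=
    { toFun f p := if p.2 • p.1 = n then f p else 0
      map_add' f f' := by ext p; by_cases p.2 • p.1 = n <;> simp_all
      map_smul' c f := by ext p; by_cases p.2 • p.1 = n <;> simp_all }
  rho :=
    { toFun h := LinearMap.funLeft K K fun p => (p.1, h⁻¹ * p.2)
      map_one' := by ext; simp
      map_mul' g h := by ext; simp [mul_assoc] }
  proj_idem n := LinearMap.ext fun f => funext fun p => by
    by_cases p.2 • p.1 = n <;> simp_all
  proj_orth n n' hn := LinearMap.ext fun f => funext fun p => by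
    by_cases p.2 • p.1 = n <;> simp_all
  proj_sum := LinearMap.ext fun f => funext fun p => by simp
  compat g n := LinearMap.ext fun f => funext fun p => by
    simp [mul_smul, inv_smul_eq_iff]

lemma finrank_regular : finrank K (regular K M G).carrier = Fintype.card M * Fintype.card G :=
  (Module.finrank_fintype_fun_eq_card K).trans (Fintype.card_prod M G)

variable {K M G}

lemma pi_dual_mem_homSpace_regular (V : AGRep K M G) (ψ : Dual K V.carrier) :
    (LinearMap.pi fun p : M × G => ψ ∘ₗ V.P p.1 ∘ₗ V.rho p.2⁻¹) ∈ homSpace V (regular K M G) := by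
  refine ⟨fun g v => funext fun p => ?_, fun n v => funext fun p => ?_⟩
  · simp [← Module.End.mul_apply, ← map_mul]
  · obtain ⟨m, g⟩ := p
    by_cases h : g • m = n
    · subst h
      simp [rho_P_apply]
    · simp [rho_P_apply, h, P_P_apply_of_ne _ (mt eq_inv_smul_iff.mp h)]

noncomputable def homSpaceRegularEquivDual (V : AGRep K M G) :
    homSpace V (regular K M G) ≃ₗ[K] Dual K V.carrier where
  toFun f := (∑ m : M, LinearMap.proj (m, 1)) ∘ₗ f.1
  map_add' f f' := LinearMap.comp_add _ _ _
  map_smul' c f := LinearMap.comp_smul _ _ _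
  invFun ψ := ⟨_, pi_dual_mem_homSpace_regular V ψ⟩
  left_inv f := by
    ext v ⟨m, g⟩
    simp [f.2.1, f.2.2]
  right_inv ψ := by
    ext v
    simp [← map_sum ψ, sum_P_apply]

lemma finrank_homSpace_regular (V : AGRep K M G) :
    finrank K (homSpace V (regular K M G)) = finrank K V.carrier :=
  (homSpaceRegularEquivDual V).finrank_eq.trans Subspace.dual_finrank_eq

end Regular

end AGRep

/-- Burnside's theorem for action groupoids: if `(V_i)` is a complete set of
representatives of the isomorphism classes of irreducible representations of `M//G`
over an algebraically closed field of characteristic zero, with dimensions `d_i`,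
then `∑ d_i² = |M|·|G|`. -/
theorem agRep_sum_sq_dim [Fintype G] [IsAlgClosed K] [CharZero K]
    {ι : Type} [Fintype ι] (V : ι → AGRep K M G)
    (hirr : ∀ i, (V i).Irreducible)
    (hdist : ∀ i j, i ≠ j → ¬ (V i).Iso (V j))
    (hcomp : ∀ W : AGRep K M G, W.Irreducible → ∃ i, W.Iso (V i)) :
    ∑ i : ι, (Module.finrank K (V i).carrier) ^ 2
      = Fintype.card M * Fintype.card G := by
  classical
  let := invertibleOfNonzero (Nat.cast_ne_zero.mpr Fintype.card_ne_zero : (Fintype.card G : K) ≠ 0)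
  calc ∑ i, finrank K (V i).carrier ^ 2
      = ∑ i, finrank K (V i).carrier * finrank K (AGRep.homSpace (V i) (AGRep.regular K M G)) :=
        Finset.sum_congr rfl fun i _ => by rw [sq, AGRep.finrank_homSpace_regular]
    _ = finrank K (AGRep.regular K M G).carrier :=
        (AGRep.finrank_eq_sum_finrank_mul_finrank_homSpace hirr hdist hcomp _).symm
    _ = Fintype.card M * Fintype.card G := AGRep.finrank_regular K M G
end
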